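/- Let G be a triangle-free graph maximizing the number of 5-cycles among triangle-free graphs on its vertex set, partitioned as above into X_1,...,X_5 relative to a 5-cycle C with every vertex having exactly two neighbors on C. Then every u_i ∈ X_i is adjacent to every u_{i+1} ∈ X_{i+1} (indices mod 5). -/

import Mathlib

/-- The number of (unlabeled) copies of `C₅` in a graph. -/
noncomputable def c5Count {V : Type*} [Fintype V] (G : SimpleGraph V) : ℕ :=
  Set.ncard {s : Finset V | s.card = 5 ∧
    Nonempty (G.induce (s : Set V) ≃g SimpleGraph.cycleGraph 5)}

/-!
Rotating indices, take `i = 0`. If `u ∈ X₀` and `w ∈ X₁` were not adjacent, they would have no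
common neighbour: it would lie off the cycle and, the graph being triangle-free, see only `v₃` on
it. So adding the edge `uw` creates no triangle, and it destroys no induced 5-cycle, because any
two non-adjacent vertices of a 5-cycle have a common neighbour. But it creates the induced 5-cycle
`u w v₂ v₃ v₄`, contradicting maximality.
-/
namespace SimpleGraph

variable {V W : Type*} {G : SimpleGraph V}

lemma CliqueFree.not_adj_of_adj_of_adj (hG : G.CliqueFree 3) {a b c : V} (hab : G.Adj a b)
    (hac : G.Adj a c) : ¬G.Adj b c :=
  fun hbc ↦ by classical exact hG _ (is3Clique_triple_iff.mpr ⟨hab, hac, hbc⟩)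

lemma CliqueFree.sup_edge_of_forall_not_adj (hG : G.CliqueFree 3) {u w : V}
    (h : ∀ x, G.Adj u x → ¬G.Adj w x) : (G ⊔ edge u w).CliqueFree 3 := by
  classical
  intro t ht
  have hu : u ∈ t := hG.mem_of_sup_edge_isNClique ht
  have hw : w ∈ t := hG.mem_of_sup_edge_isNClique (edge_comm u w ▸ ht)
  obtain ⟨x, hxt, hx⟩ := Finset.exists_mem_notMem_of_card_lt_card
    (s := {u, w}) (t := t) (by rw [ht.card_eq]; exact (Finset.card_le_two).trans_lt (by norm_num))
  obtain ⟨hxu, hxw⟩ : x ≠ u ∧ x ≠ w := by simpa [not_or] using hx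
  have hux := ht.1 hu hxt hxu.symm
  have hwx := ht.1 hw hxt hxw.symm
  simp only [sup_adj, edge_adj, hxu, hxw, and_false, false_and, or_false] at hux hwx
  exact h x hux hwx

def Embedding.ofAdjIff {K : SimpleGraph W} (hK : ∀ a b, (∀ c, K.Adj a c ↔ K.Adj b c) → a = b)
    (f : W → V) (hf : ∀ a b, G.Adj (f a) (f b) ↔ K.Adj a b) : K ↪g G where
  toFun := f
  inj' a b hab := hK a b fun c ↦ by rw [← hf, ← hf, hab]
  map_rel_iff' := hf _ _

lemma cycleGraph_five_eq_of_forall_adj_iff (a b : Fin 5)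
    (h : ∀ c, (cycleGraph 5).Adj a c ↔ (cycleGraph 5).Adj b c) : a = b := by
  revert a b; decide

lemma cycleGraph_five_exists_adj_adj_of_not_adj (a b : Fin 5) (hab : a ≠ b)
    (h : ¬(cycleGraph 5).Adj a b) : ∃ c, (cycleGraph 5).Adj a c ∧ (cycleGraph 5).Adj b c := by
  revert a b; decide

lemma cycleGraph_five_exists_eq_of_not_adj_of_not_adj (a b : Fin 5)
    (hab : (cycleGraph 5).Adj a b) :
    ∃ c, ∀ j, ¬(cycleGraph 5).Adj a j → ¬(cycleGraph 5).Adj b j → j = c := by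
  revert a b; decide

lemma cycleGraph_five_cliqueFree_three : (cycleGraph 5).CliqueFree 3 := by
  intro t ht
  obtain ⟨a, b, c, hab, hac, hbc, -⟩ := is3Clique_iff.mp ht
  revert a b c
  decide

lemma cycleGraph_adj_add_right {n : ℕ} (a b c : Fin (n + 2)) :
    (cycleGraph (n + 2)).Adj (a + c) (b + c) ↔ (cycleGraph (n + 2)).Adj a b := by
  simp only [cycleGraph_adj, add_sub_add_right_eq_sub]

lemma cycleGraph_five_adj_add_iff (j d : Fin 5) :
    (cycleGraph 5).Adj j (j + d) ↔ d = 1 ∨ d = 4 := by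
  revert j d; decide

lemma CliqueFree.adj_iff_cycleGraph_adj (hG : G.CliqueFree 3) {v : Fin 5 → V}
    (hv : ∀ i, G.Adj (v i) (v (i + 1))) (j k : Fin 5) :
    G.Adj (v j) (v k) ↔ (cycleGraph 5).Adj j k := by
  have hv2 (i : Fin 5) : ¬G.Adj (v i) (v (i + 2)) := by
    simpa [add_assoc] using hG.not_adj_of_adj_of_adj (hv i).symm (hv (i + 1))
  obtain ⟨d, rfl⟩ : ∃ d, k = j + d := ⟨k - j, by abel⟩
  rw [cycleGraph_five_adj_add_iff]
  fin_cases d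
  · simp
  · simpa using hv j
  · simpa using hv2 j
  · simpa [add_assoc, G.adj_comm] using hv2 (j + 3)
  · simpa [add_assoc, G.adj_comm] using hv (j + 4)

def inducedC5Sets (G : SimpleGraph V) : Set (Finset V) :=
  {s | s.card = 5 ∧ Nonempty (G.induce (s : Set V) ≃g cycleGraph 5)}

lemma notMem_inducedC5Sets_of_forall_not_adj {s : Finset V} {u w : V} (huw : u ≠ w)
    (hadj : ¬G.Adj u w) (h : ∀ x, G.Adj u x → ¬G.Adj w x) (hu : u ∈ s) (hw : w ∈ s) :
    s ∉ G.inducedC5Sets := by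
  rintro ⟨-, ⟨e⟩⟩
  obtain ⟨c, huc, hwc⟩ := cycleGraph_five_exists_adj_adj_of_not_adj (e ⟨u, hu⟩) (e ⟨w, hw⟩)
    (by simpa using huw) (by rw [e.map_adj_iff]; exact hadj)
  have hux := e.symm.map_adj_iff.mpr huc
  have hwx := e.symm.map_adj_iff.mpr hwc
  simp only [RelIso.symm_apply_apply, comap_adj, Function.Embedding.subtype_apply] at hux hwx
  exact h _ hux hwx

lemma induce_sup_edge_eq_of_notMem {s : Set V} {u w : V} (h : u ∉ s ∨ w ∉ s) :
    (G ⊔ edge u w).induce s = G.induce s := by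
  ext ⟨a, ha⟩ ⟨b, hb⟩
  simp only [comap_adj, Function.Embedding.subtype_apply, sup_adj, edge_adj, or_iff_left_iff_imp]
  rintro ⟨(⟨rfl, rfl⟩ | ⟨rfl, rfl⟩), -⟩ <;> tauto

lemma inducedC5Sets_subset_sup_edge {u w : V} (huw : u ≠ w) (hadj : ¬G.Adj u w)
    (h : ∀ x, G.Adj u x → ¬G.Adj w x) : G.inducedC5Sets ⊆ (G ⊔ edge u w).inducedC5Sets := by
  intro s hs
  have hsuw : u ∉ (s : Set V) ∨ w ∉ (s : Set V) := by
    by_contra! hmem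
    exact notMem_inducedC5Sets_of_forall_not_adj huw hadj h hmem.1 hmem.2 hs
  exact ⟨hs.1, by rw [induce_sup_edge_eq_of_notMem hsuw]; exact hs.2⟩

lemma Embedding.map_univ_mem_inducedC5Sets (e : cycleGraph 5 ↪g G) :
    Finset.univ.map e.toEmbedding ∈ G.inducedC5Sets := by
  refine ⟨by simp, ⟨?_⟩⟩
  rw [Finset.coe_map, Finset.coe_univ, Set.image_univ]
  exact (Embedding.isoInduceRange e).symm

lemma c5Count_lt_sup_edge [Fintype V] {u w : V} (huw : u ≠ w) (hadj : ¬G.Adj u w)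
    (h : ∀ x, G.Adj u x → ¬G.Adj w x) (e : cycleGraph 5 ↪g G ⊔ edge u w)
    (hu : u ∈ Set.range e) (hw : w ∈ Set.range e) : c5Count G < c5Count (G ⊔ edge u w) := by
  refine Set.ncard_lt_ncard ((Set.ssubset_iff_of_subset
    (inducedC5Sets_subset_sup_edge huw hadj h)).mpr ⟨_, e.map_univ_mem_inducedC5Sets, ?_⟩)
    (Set.toFinite _)
  exact notMem_inducedC5Sets_of_forall_not_adj huw hadj h (by simpa using hu) (by simpa using hw)

section FiveCycleClasses

variable {v : Fin 5 → V} {u w : V}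

lemma sup_edge_adj_cons_iff (hvC : ∀ j k, G.Adj (v j) (v k) ↔ (cycleGraph 5).Adj j k)
    (hu : ∀ j, G.Adj u (v j) ↔ (cycleGraph 5).Adj 0 j)
    (hw : ∀ j, G.Adj w (v j) ↔ (cycleGraph 5).Adj 1 j) (huw : u ≠ w) (hadj : ¬G.Adj u w)
    (hvu : ∀ j, v j ≠ u) (hvw : ∀ j, v j ≠ w) (a b : Fin 5) :
    (G ⊔ edge u w).Adj (![u, w, v 2, v 3, v 4] a) (![u, w, v 2, v 3, v 4] b) ↔
      (cycleGraph 5).Adj a b := by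
  fin_cases a <;> fin_cases b <;>
    simp [edge_adj, hvC, hu, hw, huw, huw.symm, hadj, hvu, hvw, G.adj_comm _ u, G.adj_comm _ w] <;>
    decide

lemma apply_ne_of_forall_adj_iff (hvC : ∀ j k, G.Adj (v j) (v k) ↔ (cycleGraph 5).Adj j k)
    {a : Fin 5} (hu : ∀ j, G.Adj u (v j) ↔ (cycleGraph 5).Adj a j) (hw : G.Adj w (v a))
    (hadj : ¬G.Adj u w) (j : Fin 5) : v j ≠ u := by
  rintro rfl
  obtain rfl : j = a := cycleGraph_five_eq_of_forall_adj_iff j a fun k ↦ (hvC j k).symm.trans (hu k)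
  exact hadj hw.symm

lemma forall_not_adj_of_forall_adj_iff (hG : G.CliqueFree 3)
    (htwo : ∀ x, x ∉ Set.range v → {j | G.Adj x (v j)}.ncard = 2) {a b : Fin 5}
    (hab : (cycleGraph 5).Adj a b) (hu : ∀ j, G.Adj u (v j) ↔ (cycleGraph 5).Adj a j)
    (hw : ∀ j, G.Adj w (v j) ↔ (cycleGraph 5).Adj b j) (x : V) (hux : G.Adj u x) :
    ¬G.Adj w x := by
  intro hwx
  have hx : x ∉ Set.range v := by
    rintro ⟨j, rfl⟩
    exact cycleGraph_five_cliqueFree_three.not_adj_of_adj_of_adj hab.symm ((hw j).mp hwx)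
      ((hu j).mp hux)
  obtain ⟨c, hc⟩ := cycleGraph_five_exists_eq_of_not_adj_of_not_adj a b hab
  have hsub : {j | G.Adj x (v j)} ⊆ {c} := fun j hj ↦
    hc j (fun h ↦ hG.not_adj_of_adj_of_adj hux ((hu j).mpr h) hj)
      (fun h ↦ hG.not_adj_of_adj_of_adj hwx ((hw j).mpr h) hj)
  have := Set.ncard_le_ncard hsub
  simp [htwo x hx] at this

theorem adj_of_forall_adj_iff_cycleGraph_adj [Fintype V] (hG : G.CliqueFree 3)
    (hmax : ∀ H : SimpleGraph V, H.CliqueFree 3 → c5Count H ≤ c5Count G)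
    (hv : ∀ i, G.Adj (v i) (v (i + 1)))
    (htwo : ∀ x, x ∉ Set.range v → {j | G.Adj x (v j)}.ncard = 2)
    (hu : ∀ j, G.Adj u (v j) ↔ (cycleGraph 5).Adj 0 j)
    (hw : ∀ j, G.Adj w (v j) ↔ (cycleGraph 5).Adj 1 j) : G.Adj u w := by
  by_contra hadj
  have hvC := hG.adj_iff_cycleGraph_adj hv
  have huw : u ≠ w := by
    rintro rfl
    exact absurd ((hu 1).mpr (by decide)) (by rw [hw]; decide)
  have hvu := apply_ne_of_forall_adj_iff hvC hu ((hw 0).mpr (by decide)) hadj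
  have hvw := apply_ne_of_forall_adj_iff hvC hw ((hu 1).mpr (by decide)) (fun h ↦ hadj h.symm)
  have hnot := forall_not_adj_of_forall_adj_iff hG htwo (by decide) hu hw
  let e : cycleGraph 5 ↪g G ⊔ edge u w := Embedding.ofAdjIff
    cycleGraph_five_eq_of_forall_adj_iff _ (sup_edge_adj_cons_iff hvC hu hw huw hadj hvu hvw)
  exact (hmax _ (hG.sup_edge_of_forall_not_adj hnot)).not_gt
    (c5Count_lt_sup_edge huw hadj hnot e ⟨0, rfl⟩ ⟨1, rfl⟩)

end FiveCycleClasses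

end SimpleGraph

open SimpleGraph

theorem consecutive_classes_complete_general {V : Type*} [Fintype V]
    (G : SimpleGraph V) (hTF : G.CliqueFree 3)
    (hmax : ∀ H : SimpleGraph V, H.CliqueFree 3 → c5Count H ≤ c5Count G)
    (v : Fin 5 → V)
    (hcyc : ∀ i : Fin 5, G.Adj (v i) (v (i + 1)))
    (htwo : ∀ u : V, u ∉ Set.range v → {j : Fin 5 | G.Adj u (v j)}.ncard = 2) :
    ∀ (i : Fin 5) (u w : V),
      (∀ j : Fin 5, G.Adj u (v j) ↔ G.Adj (v i) (v j)) →
      (∀ j : Fin 5, G.Adj w (v j) ↔ G.Adj (v (i + 1)) (v j)) →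
      G.Adj u w := by
  intro i u w hu hw
  have hvC := hTF.adj_iff_cycleGraph_adj hcyc
  have hrange : Set.range (fun j ↦ v (j + i)) = Set.range v :=
    (Equiv.addRight i).surjective.range_comp v
  refine adj_of_forall_adj_iff_cycleGraph_adj hTF hmax (v := fun j ↦ v (j + i))
    (fun j ↦ by simpa [add_right_comm] using hcyc (j + i)) (fun x hx ↦ ?_)
    (fun j ↦ by rw [hu, hvC, ← cycleGraph_adj_add_right 0 j i, zero_add])
    (fun j ↦ by rw [hw, hvC, ← cycleGraph_adj_add_right 1 j i, add_comm 1 i])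
  rw [hrange] at hx
  rw [← htwo x hx]
  exact Set.ncard_preimage_of_injective_subset_range (s := {j | G.Adj x (v j)})
    (add_left_injective i) fun j _ ↦ ⟨j - i, sub_add_cancel j i⟩

/-- Let `G` be triangle-free on `n ≥ 10` vertices maximizing the number of
5-cycles, with a 5-cycle `v₀…v₄` such that every vertex outside it has exactly
two neighbors on it, and `Xᵢ` the set of vertices with the same neighborhood on
the cycle as `vᵢ`. Then every vertex of `Xᵢ` is adjacent to every vertex of
`Xᵢ₊₁`. -/
theorem consecutive_classes_complete {V : Type*} [Fintype V]
    (G : SimpleGraph V) (hTF : G.CliqueFree 3)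
    (hn : 10 ≤ Fintype.card V)
    (hmax : ∀ H : SimpleGraph V, H.CliqueFree 3 → c5Count H ≤ c5Count G)
    (v : Fin 5 → V) (hinj : Function.Injective v)
    (hcyc : ∀ i : Fin 5, G.Adj (v i) (v (i + 1)))
    (htwo : ∀ u : V, u ∉ Set.range v → {j : Fin 5 | G.Adj u (v j)}.ncard = 2) :
    ∀ (i : Fin 5) (u w : V),
      (∀ j : Fin 5, G.Adj u (v j) ↔ G.Adj (v i) (v j)) →
      (∀ j : Fin 5, G.Adj w (v j) ↔ G.Adj (v (i + 1)) (v j)) →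
      G.Adj u w :=
  consecutive_classes_complete_general G hTF hmax v hcyc htwo
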